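/- Let X be a real diagonal n×n matrix. Then convexHull{g X gᵀ : g ∈ O(n)} ∩ {diagonal matrices} = convexHull{σ·X : σ ∈ S_n}; that is, the intersection of the symmetric Schur–Horn orbitope of X with the subspace of diagonal matrices equals the convex hull of the matrices obtained from X by permuting its diagonal entries. -/

import Mathlib

/-!
Write `X = diagonal d`. The diagonal of `g X gᵀ` is `(g ⊙ g) *ᵥ d`, and for orthogonal `g` the
matrix `g ⊙ g` is doubly stochastic. By Birkhoff's theorem, `S ↦ S *ᵥ d` maps the doubly
stochastic matrices onto the convex hull of the permutations of `d`. Since taking the diagonal is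
linear and fixes diagonal matrices, every diagonal point of the orbitope lies in that hull.
Conversely, conjugating `X` by a permutation matrix permutes its diagonal entries.
-/

open Matrix

variable {ι R : Type*} [Fintype ι] [DecidableEq ι]

namespace Matrix

def orthogonalConjOrbit [CommRing R] (d : ι → R) : Set (Matrix ι ι R) :=
  {m | ∃ g ∈ orthogonalGroup ι R, m = g * diagonal d * gᵀ}

lemma diag_mul_diagonal_mul_transpose [CommSemiring R] (g : Matrix ι ι R) (d : ι → R) :
    (g * diagonal d * gᵀ).diag = (g ⊙ g) *ᵥ d := by
  ext i
  rw [diag_apply, mul_apply]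
  simp only [mul_diagonal, transpose_apply, mulVec, dotProduct, hadamard_apply]
  exact Finset.sum_congr rfl fun j _ => by ring

lemma permMatrix_mem_orthogonalGroup [CommRing R] (σ : Equiv.Perm ι) :
    σ.permMatrix R ∈ orthogonalGroup ι R := by
  rw [mem_orthogonalGroup_iff, transpose_permMatrix, ← permMatrix_mul, inv_mul_cancel,
    permMatrix_one]

lemma permMatrix_mul_diagonal_mul_transpose [CommRing R] (σ : Equiv.Perm ι) (d : ι → R) :
    σ.permMatrix R * diagonal d * (σ.permMatrix R)ᵀ = diagonal (d ∘ σ) := by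
  rw [transpose_permMatrix, PEquiv.toMatrix_toPEquiv_mul, PEquiv.mul_toMatrix_toPEquiv,
    submatrix_submatrix]
  simp [Equiv.Perm.inv_def]

lemma image_diagonal_convexHull_perm_subset [CommRing R] [PartialOrder R] (d : ι → R) :
    diagonal '' convexHull R (Set.range fun σ : Equiv.Perm ι => d ∘ σ) ⊆
      convexHull R (orthogonalConjOrbit d) := by
  refine ((diagonalLinearMap ι R R).image_convexHull _).trans_subset (convexHull_mono ?_)
  rintro _ ⟨_, ⟨σ, rfl⟩, rfl⟩
  exact ⟨σ.permMatrix R, permMatrix_mem_orthogonalGroup σ,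
    (permMatrix_mul_diagonal_mul_transpose σ d).symm⟩

variable [Field R] [LinearOrder R] [IsStrictOrderedRing R]

lemma hadamard_self_mem_doublyStochastic {g : Matrix ι ι R} (hg : g ∈ orthogonalGroup ι R) :
    g ⊙ g ∈ doublyStochastic R ι := by
  rw [mem_doublyStochastic_iff_sum]
  refine ⟨fun i j => mul_self_nonneg _, fun i => ?_, fun j => ?_⟩
  · simpa [mul_apply] using congr_fun₂ ((mem_orthogonalGroup_iff _ _).1 hg) i i
  · simpa [mul_apply] using congr_fun₂ ((mem_orthogonalGroup_iff' _ _).1 hg) j j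

lemma image_mulVec_doublyStochastic (d : ι → R) :
    (· *ᵥ d) '' (doublyStochastic R ι : Set (Matrix ι ι R)) =
      convexHull R (Set.range fun σ : Equiv.Perm ι => d ∘ σ) := by
  rw [doublyStochastic_eq_convexHull_permMatrix]
  refine (((mulVecBilin R R).flip d).image_convexHull _).trans ?_
  congr 1
  ext v
  simp [permMatrix_mulVec, eq_comm]

lemma image_diag_convexHull_orthogonalConjOrbit_subset (d : ι → R) :
    diag '' convexHull R (orthogonalConjOrbit d) ⊆
      convexHull R (Set.range fun σ : Equiv.Perm ι => d ∘ σ) :=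
  calc diag '' convexHull R (orthogonalConjOrbit d)
      = convexHull R (diag '' orthogonalConjOrbit d) := (diagLinearMap ι R R).image_convexHull _
    _ ⊆ convexHull R ((· *ᵥ d) '' (doublyStochastic R ι : Set (Matrix ι ι R))) := by
      refine convexHull_mono ?_
      rintro _ ⟨_, ⟨g, hg, rfl⟩, rfl⟩
      exact ⟨g ⊙ g, hadamard_self_mem_doublyStochastic hg,
        (diag_mul_diagonal_mul_transpose g d).symm⟩
    _ = _ := by rw [image_mulVec_doublyStochastic, (convex_convexHull R _).convexHull_eq]

end Matrix

/-- for a real diagonal matrix `X = diagonal d`, the intersection of the symmetric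
Schur–Horn orbitope `convexHull {g X gᵀ : g ∈ O(n)}` with the set of diagonal matrices equals
the convex hull of the matrices obtained from `X` by permuting its diagonal entries. -/
theorem schurHorn_orbitope_inter_diagonal
    {n : ℕ} (d : Fin n → ℝ) :
    convexHull ℝ {m : Matrix (Fin n) (Fin n) ℝ |
        ∃ g ∈ Matrix.orthogonalGroup (Fin n) ℝ, m = g * Matrix.diagonal d * gᵀ}
      ∩ Set.range (Matrix.diagonal : (Fin n → ℝ) → Matrix (Fin n) (Fin n) ℝ) =
    convexHull ℝ {m : Matrix (Fin n) (Fin n) ℝ |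
        ∃ σ : Equiv.Perm (Fin n), m = Matrix.diagonal (fun i => d (σ⁻¹ i))} := by
  have hperms : convexHull ℝ {m | ∃ σ : Equiv.Perm (Fin n), m = diagonal fun i => d (σ⁻¹ i)} =
      diagonal '' convexHull ℝ (Set.range fun σ : Equiv.Perm (Fin n) => d ∘ σ) := by
    refine .trans ?_ ((diagonalLinearMap (Fin n) ℝ ℝ).image_convexHull _).symm
    congr 1
    ext m
    constructor
    · rintro ⟨σ, rfl⟩
      exact ⟨d ∘ ⇑σ⁻¹, ⟨σ⁻¹, rfl⟩, rfl⟩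
    · rintro ⟨_, ⟨σ, rfl⟩, rfl⟩
      exact ⟨σ⁻¹, by simp⟩
  change convexHull ℝ (orthogonalConjOrbit d) ∩ _ = _
  rw [hperms]
  refine subset_antisymm ?_
    (Set.subset_inter (image_diagonal_convexHull_perm_subset d) (Set.image_subset_range _ _))
  rintro _ ⟨hm, a, rfl⟩
  exact ⟨a, image_diag_convexHull_orthogonalConjOrbit_subset d ⟨_, hm, diag_diagonal a⟩, rfl⟩
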